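/- Let [X,B,m,ν] be a reversible random walk space and Ω ∈ B with Ω and Ω_m m-connected, 0 < ν(Ω) < ν(Ω_m) < ∞, and Ω satisfying a 2-Poincaré inequality. Then ν(Ω)²/P_m(Ω) ≤ T_m(Ω). Moreover, if Ω is m-calibrable, i.e. h_1^m(Ω) = P_m(Ω)/ν(Ω), then T_m(Ω) ≤ (1/2)·ν(Ω)²·ν(Ω_m)/P_m(Ω)². -/

import Mathlib

open MeasureTheory ENNReal Filter Topology

namespace RandomWalkSpace

variable {X : Type*} [MeasurableSpace X]

/-- A random walk: a family of probability measures `m x`, measurably depending on `x`. -/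
def IsRandomWalk (m : X → Measure X) : Prop :=
  (∀ x, IsProbabilityMeasure (m x)) ∧
    ∀ A : Set X, MeasurableSet A → Measurable fun x => m x A

/-- Reversibility (detailed balance) of `ν` with respect to the random walk `m`. -/
def Reversible (m : X → Measure X) (ν : Measure X) : Prop :=
  ∀ A B : Set X, MeasurableSet A → MeasurableSet B →
    ∫⁻ x in A, m x B ∂ν = ∫⁻ x in B, m x A ∂ν

/-- The `m`-boundary of `Ω`. -/
def mBoundary (m : X → Measure X) (Ω : Set X) : Set X :=
  {x | x ∉ Ω ∧ 0 < m x Ω}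

/-- The `m`-closure of `Ω`. -/
def mClosure (m : X → Measure X) (Ω : Set X) : Set X :=
  Ω ∪ mBoundary m Ω

/-- `D` is `m`-connected (with respect to `ν`). -/
def mConnected (m : X → Measure X) (ν : Measure X) (D : Set X) : Prop :=
  ∀ A B : Set X, MeasurableSet A → MeasurableSet B → A ⊆ D → B ⊆ D →
    A ∪ B = D → 0 < ν A → 0 < ν B → 0 < ∫⁻ x in A, m x B ∂ν

/-- The `m`-perimeter of `Ω`. -/
noncomputable def mPerimeter (m : X → Measure X) (ν : Measure X) (Ω : Set X) : ℝ≥0∞ :=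
  ∫⁻ x in Ω, m x Ωᶜ ∂ν

/-- `survival m Ω n x` is the mass of paths of `n` jumps starting at `x` that stay in `Ω`. -/
noncomputable def survival (m : X → Measure X) (Ω : Set X) : ℕ → X → ℝ≥0∞
  | 0, _ => 1
  | n + 1, x => ∫⁻ y in Ω, survival m Ω n y ∂(m x)

/-- `gseq m ν Ω n` is the mass of paths of `n` jumps that start in `Ω` and stay in `Ω`. -/
noncomputable def gseq (m : X → Measure X) (ν : Measure X) (Ω : Set X) (n : ℕ) : ℝ≥0∞ :=
  ∫⁻ x in Ω, survival m Ω n x ∂ν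

/-- The spectral `m`-heat content of `Ω` at time `t`. -/
noncomputable def heatContent (m : X → Measure X) (ν : Measure X) (Ω : Set X) (t : ℝ) : ℝ≥0∞ :=
  ∑' k : ℕ, gseq m ν Ω k * ENNReal.ofReal (Real.exp (-t) * t ^ k / (Nat.factorial k))

/-- The nonlocal `p`-energy `∫_{Ω_m×Ω_m} |f(y) − f(x)|^p dm_x(y)dν(x)`. -/
noncomputable def energy (m : X → Measure X) (ν : Measure X) (Ω : Set X) (p : ℝ)
    (f : X → ℝ) : ℝ≥0∞ :=
  ∫⁻ x in mClosure m Ω, ∫⁻ y in mClosure m Ω, ENNReal.ofReal (|f y - f x| ^ p) ∂(m x) ∂ν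

/-- `f ∈ L^p_0(Ω_m,ν)`: `f ∈ L^p(Ω_m,ν)` and `f = 0` ν-a.e. on `∂_m Ω`. -/
def InLp0 (m : X → Measure X) (ν : Measure X) (Ω : Set X) (p : ℝ) (f : X → ℝ) : Prop :=
  MemLp f (ENNReal.ofReal p) (ν.restrict (mClosure m Ω)) ∧
    ∀ᵐ x ∂ν.restrict (mBoundary m Ω), f x = 0

/-- `Ω` satisfies a `p`-Poincaré inequality. -/
def PoincareInequality (m : X → Measure X) (ν : Measure X) (Ω : Set X) (p : ℝ) : Prop :=
  ∃ lam : ℝ, 0 < lam ∧ ∀ f : X → ℝ, InLp0 m ν Ω p f →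
    ENNReal.ofReal lam * ∫⁻ x in Ω, ENNReal.ofReal (|f x| ^ p) ∂ν ≤ energy m ν Ω p f

/-- The `m`-stress function of `Ω`. -/
def IsStressFunction (m : X → Measure X) (ν : Measure X) (Ω : Set X) (f : X → ℝ) : Prop :=
  InLp0 m ν Ω 2 f ∧ (∀ᵐ x ∂ν.restrict (mClosure m Ω), 0 ≤ f x) ∧
    ∀ᵐ x ∂ν.restrict Ω, -∫ y in mClosure m Ω, (f y - f x) ∂(m x) = 1

/-- The `p`-torsion function of `Ω`. -/
def IsPStressFunction (m : X → Measure X) (ν : Measure X) (Ω : Set X) (p : ℝ)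
    (f : X → ℝ) : Prop :=
  InLp0 m ν Ω p f ∧ (∀ᵐ x ∂ν.restrict (mClosure m Ω), 0 ≤ f x) ∧
    ∀ᵐ x ∂ν.restrict Ω,
      -∫ y in mClosure m Ω, |f y - f x| ^ (p - 2) * (f y - f x) ∂(m x) = 1

/-- The Rayleigh quotient infimum `λ_{m,p}(Ω)`. -/
noncomputable def rayleigh (m : X → Measure X) (ν : Measure X) (Ω : Set X) (p : ℝ) : ℝ≥0∞ :=
  ⨅ (f : X → ℝ) (_ : InLp0 m ν Ω p f)
    (_ : 0 < ∫⁻ x in Ω, ENNReal.ofReal (|f x| ^ p) ∂ν),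
    (energy m ν Ω p f / 2) / ∫⁻ x in Ω, ENNReal.ofReal (|f x| ^ p) ∂ν

/-- The `m`-Cheeger constant `h_1^m(Ω)`. -/
noncomputable def cheeger1 (m : X → Measure X) (ν : Measure X) (Ω : Set X) : ℝ≥0∞ :=
  ⨅ (E : Set X) (_ : MeasurableSet E) (_ : E ⊆ Ω) (_ : 0 < ν E),
    mPerimeter m ν E / ν E

/-- The `m`-`p`-Cheeger constant `h_p^m(Ω)`. -/
noncomputable def cheegerP (m : X → Measure X) (ν : Measure X) (Ω : Set X) (p : ℝ) : ℝ≥0∞ :=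
  ⨅ (E : Set X) (_ : MeasurableSet E) (_ : E ⊆ Ω) (_ : 0 < ν E),
    mPerimeter m ν E / ν E ^ p

/-- The functional `F_{m,p}(f) = (1/(2p)) ∫∫ |∇f|^p − ∫_Ω f`, with values in `EReal`. -/
noncomputable def torsionalFunctional (m : X → Measure X) (ν : Measure X) (Ω : Set X)
    (p : ℝ) (f : X → ℝ) : EReal :=
  ((energy m ν Ω p f / ENNReal.ofReal (2 * p) : ℝ≥0∞) : EReal) -
    ((∫ x in Ω, f x ∂ν : ℝ) : EReal)

end RandomWalkSpace

/-!
Let `π = dm_x(y) dν(x)` on `Ω_m × Ω_m`, which reversibility makes symmetric, and `T = ∫_Ω f`.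
Testing `-Δf = 1` against `f` gives the energy identity `∫∫ (f y - f x)² dπ = 2T`, and testing it
against `1` shows that the flux `∫_{Ωᶜ × Ω} f(y) dπ` equals `ν(Ω)`. As `f = 0` off `Ω`, the energy
density on `Ωᶜ × Ω` is `f(y)²`, and by symmetry this part carries at most half of the energy, so
`∫_{Ωᶜ × Ω} f(y)² dπ ≤ T`. With `π(Ωᶜ × Ω) = P_m(Ω)`, Cauchy–Schwarz gives `ν(Ω)² ≤ T P_m(Ω)`.

Under calibrability `P_m(E) ≥ (P_m(Ω)/ν(Ω)) ν(E)` for `E ⊆ Ω`. Applied to the level sets of `f`,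
the coarea formula gives `∫∫ |f y - f x| dπ ≥ 2 (P_m(Ω)/ν(Ω)) T`, while by Cauchy–Schwarz the left
side is at most `(2T ν(Ω_m))^{1/2}`.
-/

open ProbabilityTheory

section

variable {α : Type*} [MeasurableSpace α]

lemma sq_lintegral_le_lintegral_sq_mul_measure_univ (μ : Measure α) {f : α → ℝ≥0∞}
    (hf : AEMeasurable f μ) : (∫⁻ a, f a ∂μ) ^ 2 ≤ (∫⁻ a, f a ^ 2 ∂μ) * μ Set.univ := by
  have hCS := ENNReal.lintegral_mul_le_Lp_mul_Lq μ Real.HolderConjugate.two_two hf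
    (aemeasurable_const (b := 1))
  simp only [Pi.mul_apply, mul_one, lintegral_const, one_pow, one_mul, ENNReal.rpow_two] at hCS
  calc (∫⁻ a, f a ∂μ) ^ 2
      ≤ ((∫⁻ a, f a ^ 2 ∂μ) ^ (1 / 2 : ℝ) * μ Set.univ ^ (1 / 2 : ℝ)) ^ 2 := by gcongr
    _ = (∫⁻ a, f a ^ 2 ∂μ) * μ Set.univ := by
      rw [mul_pow, ← ENNReal.rpow_natCast, ← ENNReal.rpow_natCast, ← ENNReal.rpow_mul,
        ← ENNReal.rpow_mul]
      norm_num

lemma ofReal_sub_sq_add_two_mul {a b : ℝ} (ha : 0 ≤ a) (hb : 0 ≤ b) :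
    ENNReal.ofReal ((b - a) ^ 2) + 2 * (ENNReal.ofReal a * ENNReal.ofReal b) =
      ENNReal.ofReal a ^ 2 + ENNReal.ofReal b ^ 2 := by
  rw [← ENNReal.ofReal_mul ha, ← ENNReal.ofReal_pow ha, ← ENNReal.ofReal_pow hb,
    ← ENNReal.ofReal_ofNat 2, ← ENNReal.ofReal_mul zero_le_two,
    ← ENNReal.ofReal_add (sq_nonneg _) (by positivity),
    ← ENNReal.ofReal_add (by positivity) (by positivity)]
  congr 1
  ring

lemma lintegral_ofReal_add_one_of_integral_sub {μ : Measure α} [IsProbabilityMeasure μ]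
    {g : α → ℝ} (hg : ∀ y, 0 ≤ g y) {c : ℝ} (h : ∫ y, (g y - c) ∂μ = -1) :
    ∫⁻ y, ENNReal.ofReal (g y) ∂μ + 1 = ENNReal.ofReal c := by
  have hint : Integrable (fun y => g y - c) μ := by
    by_contra hni
    rw [integral_undef hni] at h
    norm_num at h
  have hgint : Integrable g μ := by simpa [sub_eq_add_neg, integrable_add_const_iff] using hint
  have hval : ∫ y, g y ∂μ = c - 1 := by
    rw [integral_sub hgint (integrable_const c), integral_const, probReal_univ, one_smul] at h
    linarith
  have hc : 0 ≤ c - 1 := hval ▸ integral_nonneg hg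
  rw [← ofReal_integral_eq_lintegral_ofReal hgint (ae_of_all _ hg), hval, ← ENNReal.ofReal_one,
    ← ENNReal.ofReal_add hc zero_le_one, sub_add_cancel]

lemma ofReal_abs_sub_eq_volume (a b : ℝ) :
    ENNReal.ofReal |b - a| = volume {t : ℝ | t ≤ a ∧ b < t ∨ a < t ∧ t ≤ b} := by
  have hset : {t : ℝ | t ≤ a ∧ b < t ∨ a < t ∧ t ≤ b} = Set.Ioc (min a b) (max a b) := by
    ext t
    simp only [Set.mem_ofPred_eq, Set.mem_Ioc, min_lt_iff, le_max_iff]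
    constructor
    · rintro (⟨hta, hbt⟩ | ⟨hat, htb⟩) <;> tauto
    · rintro ⟨hat | hbt, hta | htb⟩ <;> first | tauto | (exfalso; linarith)
  rw [hset, Real.volume_Ioc, max_sub_min_eq_abs, abs_sub_comm]

lemma lintegral_ofReal_abs_sub_eq (π : Measure (α × α)) [SFinite π] {g : α → ℝ}
    (hg : Measurable g) :
    ∫⁻ p, ENNReal.ofReal |g p.2 - g p.1| ∂π =
      ∫⁻ t, π ({x | t ≤ g x} ×ˢ {x | t ≤ g x}ᶜ ∪ {x | t ≤ g x}ᶜ ×ˢ {x | t ≤ g x}) := by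
  set D : Set ((α × α) × ℝ) :=
    {q | q.2 ≤ g q.1.1 ∧ g q.1.2 < q.2 ∨ g q.1.1 < q.2 ∧ q.2 ≤ g q.1.2} with hD
  have hDm : MeasurableSet D := by
    have h1 : Measurable fun q : (α × α) × ℝ => g q.1.1 := by fun_prop
    have h2 : Measurable fun q : (α × α) × ℝ => g q.1.2 := by fun_prop
    exact ((measurableSet_le measurable_snd h1).inter (measurableSet_lt h2 measurable_snd)).union
      ((measurableSet_lt h1 measurable_snd).inter (measurableSet_le measurable_snd h2))
  calc ∫⁻ p, ENNReal.ofReal |g p.2 - g p.1| ∂π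
      = ∫⁻ p, volume (Prod.mk p ⁻¹' D) ∂π :=
        lintegral_congr fun p => ofReal_abs_sub_eq_volume _ _
    _ = ∫⁻ t, π ((fun p => (p, t)) ⁻¹' D) := by
        rw [← Measure.prod_apply hDm, Measure.prod_apply_symm hDm]
    _ = _ := by
        congr 1 with t
        congr 1 with p
        simp only [hD, Set.mem_preimage, Set.mem_ofPred_eq, Set.mem_union, Set.mem_prod,
          Set.mem_compl_iff, not_le]

lemma ENNReal.le_sq_mul_div_of_sq_le {a b c T : ℝ≥0∞} (ha : a ≠ 0) (ha' : a ≠ ⊤) (hb : b ≠ 0)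
    (hb' : b ≠ ⊤) (hT : T ≠ ⊤) (h : (2 * (b / a) * T) ^ 2 ≤ 2 * T * c) :
    T ≤ a ^ 2 * c / (2 * b ^ 2) := by
  rcases eq_or_ne T 0 with rfl | hT0
  · exact zero_le
  have hc : 2 * (b / a) ^ 2 * T ≤ c := by
    refine (ENNReal.mul_le_mul_iff_right (mul_ne_zero two_ne_zero hT0)
      (ENNReal.mul_ne_top ENNReal.ofNat_ne_top hT)).mp ?_
    calc 2 * T * (2 * (b / a) ^ 2 * T) = (2 * (b / a) * T) ^ 2 := by ring
      _ ≤ 2 * T * c := h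
  rw [ENNReal.le_div_iff_mul_le (Or.inl (mul_ne_zero two_ne_zero (pow_ne_zero 2 hb)))
    (Or.inl (ENNReal.mul_ne_top ENNReal.ofNat_ne_top (ENNReal.pow_ne_top hb')))]
  calc T * (2 * b ^ 2) = 2 * (b / a * a) ^ 2 * T := by rw [ENNReal.div_mul_cancel ha ha']; ring
    _ = 2 * (b / a) ^ 2 * T * a ^ 2 := by ring
    _ ≤ c * a ^ 2 := by gcongr
    _ = a ^ 2 * c := mul_comm _ _

end

namespace ProbabilityTheory.Kernel

variable {α : Type*} [MeasurableSpace α] {κ : Kernel α α} {μ : Measure α}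

lemma IsReversible.restrict (h : κ.IsReversible μ) {s : Set α} (hs : MeasurableSet s) :
    (κ.restrict hs).IsReversible (μ.restrict s) := by
  intro A B hA hB
  simp only [restrict_apply, Measure.restrict_apply hA, Measure.restrict_apply hB,
    Measure.restrict_restrict hA, Measure.restrict_restrict hB]
  exact h (hA.inter hs) (hB.inter hs)

lemma IsReversible.ae_restrict_eq_zero (h : κ.IsReversible μ) {A B : Set α}
    (hA : MeasurableSet A) (hB : MeasurableSet B) (hBA : ∀ᵐ x ∂μ.restrict B, κ x A = 0) :
    ∀ᵐ x ∂μ.restrict A, κ x B = 0 := by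
  have hzero : ∫⁻ x in A, κ x B ∂μ = 0 := by
    rw [h hA hB, lintegral_congr_ae hBA, lintegral_zero]
  exact (lintegral_eq_zero_iff (κ.measurable_coe hB)).mp hzero

lemma IsReversible.ae_ae (h : κ.IsReversible μ) {p : α → Prop} (hp : ∀ᵐ y ∂μ, p y) :
    ∀ᵐ x ∂μ, ∀ᵐ y ∂κ x, p y := by
  obtain ⟨N, hpN, hN, hμN⟩ := exists_measurable_superset_of_null (ae_iff.mp hp)
  have hκN := h.ae_restrict_eq_zero MeasurableSet.univ hN
    (by simp [Measure.restrict_eq_zero.mpr hμN])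
  rw [Measure.restrict_univ] at hκN
  filter_upwards [hκN] with x hx
  exact measure_mono_null hpN hx

lemma IsReversible.map_swap_compProd [IsFiniteMeasure μ] [IsFiniteKernel κ]
    (h : κ.IsReversible μ) : (μ ⊗ₘ κ).map Prod.swap = μ ⊗ₘ κ := by
  refine (ext_of_generate_finite _ generateFrom_prod.symm isPiSystem_prod ?_ ?_).symm
  · rintro _ ⟨A, hA, B, hB, rfl⟩
    rw [Measure.map_apply measurable_swap ((hA : MeasurableSet A).prod hB),
      Set.preimage_swap_prod, Measure.compProd_apply_prod hA hB,
      Measure.compProd_apply_prod hB hA, h hA hB]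
  · rw [Measure.map_apply measurable_swap MeasurableSet.univ, Set.preimage_univ]

lemma IsReversible.setLIntegral_swap_compProd [IsFiniteMeasure μ] [IsFiniteKernel κ]
    (h : κ.IsReversible μ) (f : α × α → ℝ≥0∞) (s : Set (α × α)) :
    ∫⁻ p in Prod.swap ⁻¹' s, f p.swap ∂(μ ⊗ₘ κ) = ∫⁻ p in s, f p ∂(μ ⊗ₘ κ) := by
  conv_rhs => rw [← h.map_swap_compProd]
  have hswap : (Prod.swap : α × α → α × α) = MeasurableEquiv.prodComm := rfl
  rw [hswap, MeasurableEquiv.restrict_map, lintegral_map_equiv]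

end ProbabilityTheory.Kernel

namespace RandomWalkSpace

variable {X : Type*} [MeasurableSpace X] {m : X → Measure X} {ν : Measure X} {Ω : Set X}

lemma measurableSet_mBoundary (hm : IsRandomWalk m) (hΩ : MeasurableSet Ω) :
    MeasurableSet (mBoundary m Ω) :=
  hΩ.compl.inter (measurableSet_lt measurable_const (hm.2 Ω hΩ))

lemma measurableSet_mClosure (hm : IsRandomWalk m) (hΩ : MeasurableSet Ω) :
    MeasurableSet (mClosure m Ω) :=
  hΩ.union (measurableSet_mBoundary hm hΩ)

lemma subset_mClosure : Ω ⊆ mClosure m Ω := Set.subset_union_left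

lemma setLIntegral_mClosure_eq {μ : Measure X} {F : X → ℝ≥0∞} (hF : ∀ x ∉ Ω, F x = 0) :
    ∫⁻ x in mClosure m Ω, F x ∂μ = ∫⁻ x in Ω, F x ∂μ := by
  have hsupp : Function.support F ⊆ Ω := fun x hx => by_contra fun hxΩ => hx (hF x hxΩ)
  rw [setLIntegral_eq_of_support_subset hsupp,
    setLIntegral_eq_of_support_subset (hsupp.trans subset_mClosure)]

lemma mPerimeter_le_measure (hm : IsRandomWalk m) : mPerimeter m ν Ω ≤ ν Ω := by
  have := hm.1
  calc ∫⁻ x in Ω, m x Ωᶜ ∂ν ≤ ∫⁻ _ in Ω, 1 ∂ν := lintegral_mono fun x => prob_le_one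
    _ = ν Ω := by simp

lemma cheeger1_mul_le_mPerimeter {E : Set X} (hE : MeasurableSet E) (hEΩ : E ⊆ Ω) :
    cheeger1 m ν Ω * ν E ≤ mPerimeter m ν E := by
  rcases eq_or_ne (ν E) 0 with hE0 | hE0
  · simp [hE0]
  · exact ENNReal.mul_le_of_le_div <| iInf_le_of_le E <| iInf_le_of_le hE <|
      iInf_le_of_le hEΩ <| iInf_le _ (pos_iff_ne_zero.mpr hE0)

def IsRandomWalk.kernel (hm : IsRandomWalk m) : Kernel X X :=
  ⟨m, Measure.measurable_of_measurable_coe _ hm.2⟩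

instance IsRandomWalk.isMarkovKernel (hm : IsRandomWalk m) : IsMarkovKernel hm.kernel :=
  ⟨hm.1⟩

lemma Reversible.isReversible (hrev : Reversible m ν) (hm : IsRandomWalk m) :
    hm.kernel.IsReversible ν :=
  fun _ _ hA hB => hrev _ _ hA hB

lemma ae_restrict_mClosure_eq (hm : IsRandomWalk m) (hrev : Reversible m ν)
    (hΩ : MeasurableSet Ω) : ∀ᵐ x ∂ν.restrict Ω, (m x).restrict (mClosure m Ω) = m x := by
  have hS := measurableSet_mClosure hm hΩ
  have hstay : ∀ᵐ x ∂ν.restrict Ω, m x (mClosure m Ω)ᶜ = 0 := by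
    refine (hrev.isReversible hm).ae_restrict_eq_zero hΩ hS.compl
      ((ae_restrict_mem hS.compl).mono fun x hx => ?_)
    by_contra hne
    exact hx (Or.inr ⟨fun hxΩ => hx (Or.inl hxΩ), pos_iff_ne_zero.mpr hne⟩)
  filter_upwards [hstay] with x hx
  exact Measure.restrict_eq_self_of_ae_mem (mem_ae_iff.mpr hx)

/-- The measure `dm_x(y) dν(x)` on `Ω_m × Ω_m`. -/
noncomputable def edgeMeasure (hm : IsRandomWalk m) (ν : Measure X) (hΩ : MeasurableSet Ω) :
    Measure (X × X) :=
  ν.restrict (mClosure m Ω) ⊗ₘ hm.kernel.restrict (measurableSet_mClosure hm hΩ)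

section EdgeMeasure

variable (hm : IsRandomWalk m) (hΩ : MeasurableSet Ω)
  [IsFiniteMeasure (ν.restrict (mClosure m Ω))]

instance : IsFiniteMeasure (edgeMeasure hm ν hΩ) := by
  unfold edgeMeasure; infer_instance

lemma setLIntegral_edgeMeasure_prod {F : X × X → ℝ≥0∞} (hF : Measurable F) {A B : Set X}
    (hA : MeasurableSet A) (hB : MeasurableSet B) :
    ∫⁻ p in A ×ˢ B, F p ∂edgeMeasure hm ν hΩ =
      ∫⁻ x in A ∩ mClosure m Ω, ∫⁻ y in B ∩ mClosure m Ω, F (x, y) ∂m x ∂ν := by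
  rw [edgeMeasure, Measure.setLIntegral_compProd hF hA hB, Measure.restrict_restrict hA]
  simp only [Kernel.restrict_apply, Measure.restrict_restrict hB]
  rfl

lemma lintegral_edgeMeasure {F : X × X → ℝ≥0∞} (hF : Measurable F) :
    ∫⁻ p, F p ∂edgeMeasure hm ν hΩ =
      ∫⁻ x in mClosure m Ω, ∫⁻ y in mClosure m Ω, F (x, y) ∂m x ∂ν := by
  simpa using setLIntegral_edgeMeasure_prod hm hΩ hF MeasurableSet.univ MeasurableSet.univ

lemma edgeMeasure_univ_le : edgeMeasure hm ν hΩ Set.univ ≤ ν (mClosure m Ω) := by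
  have := hm.1
  rw [← setLIntegral_one, ← Set.univ_prod_univ,
    setLIntegral_edgeMeasure_prod hm hΩ measurable_const MeasurableSet.univ MeasurableSet.univ]
  calc ∫⁻ x in Set.univ ∩ mClosure m Ω, ∫⁻ _ in Set.univ ∩ mClosure m Ω, 1 ∂m x ∂ν
      ≤ ∫⁻ _ in Set.univ ∩ mClosure m Ω, 1 ∂ν := lintegral_mono fun x => by simp [prob_le_one]
    _ = ν (mClosure m Ω) := by simp

variable {hm hΩ}

lemma Reversible.setLIntegral_swap_edgeMeasure (hrev : Reversible m ν) (F : X × X → ℝ≥0∞)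
    (s : Set (X × X)) :
    ∫⁻ p in Prod.swap ⁻¹' s, F p.swap ∂edgeMeasure hm ν hΩ =
      ∫⁻ p in s, F p ∂edgeMeasure hm ν hΩ :=
  ((hrev.isReversible hm).restrict _).setLIntegral_swap_compProd F s

lemma Reversible.lintegral_swap_edgeMeasure (hrev : Reversible m ν) (F : X × X → ℝ≥0∞) :
    ∫⁻ p, F p.swap ∂edgeMeasure hm ν hΩ = ∫⁻ p, F p ∂edgeMeasure hm ν hΩ := by
  simpa using hrev.setLIntegral_swap_edgeMeasure F Set.univ

lemma Reversible.edgeMeasure_prod_swap (hrev : Reversible m ν) (A B : Set X) :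
    edgeMeasure hm ν hΩ (B ×ˢ A) = edgeMeasure hm ν hΩ (A ×ˢ B) := by
  simpa [Set.preimage_swap_prod] using hrev.setLIntegral_swap_edgeMeasure (fun _ => 1) (A ×ˢ B)

lemma Reversible.edgeMeasure_prod_compl (hrev : Reversible m ν) {E : Set X}
    (hE : MeasurableSet E) (hEΩ : E ⊆ Ω) :
    edgeMeasure hm ν hΩ (E ×ˢ Eᶜ) = mPerimeter m ν E := by
  rw [← setLIntegral_one, setLIntegral_edgeMeasure_prod hm hΩ measurable_const hE hE.compl,
    Set.inter_eq_left.mpr (hEΩ.trans subset_mClosure), mPerimeter]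
  refine lintegral_congr_ae ?_
  filter_upwards [ae_restrict_of_ae_restrict_of_subset hEΩ
    (ae_restrict_mClosure_eq hm hrev hΩ)] with x hx
  rw [setLIntegral_one, ← Measure.restrict_apply hE.compl, hx]

lemma Reversible.lintegral_fst_edgeMeasure (hrev : Reversible m ν) {F : X → ℝ≥0∞}
    (hF : Measurable F) (hFΩ : ∀ x ∉ Ω, F x = 0) :
    ∫⁻ p, F p.1 ∂edgeMeasure hm ν hΩ = ∫⁻ x in Ω, F x ∂ν := by
  rw [lintegral_edgeMeasure hm hΩ (F := fun p => F p.1) (hF.comp measurable_fst),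
    setLIntegral_mClosure_eq fun x hx => by simp [hFΩ x hx]]
  refine lintegral_congr_ae ?_
  filter_upwards [ae_restrict_mClosure_eq hm hrev hΩ] with x hx
  have := hm.1 x
  simp [hx]

lemma Reversible.lintegral_snd_edgeMeasure (hrev : Reversible m ν) {F : X → ℝ≥0∞}
    (hF : Measurable F) (hFΩ : ∀ x ∉ Ω, F x = 0) :
    ∫⁻ p, F p.2 ∂edgeMeasure hm ν hΩ = ∫⁻ x in Ω, F x ∂ν := by
  rw [← hrev.lintegral_fst_edgeMeasure hF hFΩ, ← hrev.lintegral_swap_edgeMeasure]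
  rfl

end EdgeMeasure

/-- A measurable, everywhere nonnegative representative of the stress function; the equation
`-Δ g = 1` is stated in `ℝ≥0∞`. -/
structure IsStressRepr (m : X → Measure X) (ν : Measure X) (Ω : Set X) (g : X → ℝ) : Prop where
  measurable : Measurable g
  nonneg : ∀ x, 0 ≤ g x
  eq_zero_of_notMem : ∀ x ∉ Ω, g x = 0
  lintegral_ne_top : ∫⁻ x in Ω, ENNReal.ofReal (g x) ∂ν ≠ ⊤
  lintegral_sq_ne_top : ∫⁻ x in Ω, ENNReal.ofReal (g x) ^ 2 ∂ν ≠ ⊤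
  lintegral_add_one : ∀ᵐ x ∂ν.restrict Ω,
    ∫⁻ y in mClosure m Ω, ENNReal.ofReal (g y) ∂m x + 1 = ENNReal.ofReal (g x)

namespace IsStressRepr

variable {g : X → ℝ} {hm : IsRandomWalk m} {hΩ : MeasurableSet Ω}
  [IsFiniteMeasure (ν.restrict (mClosure m Ω))]

lemma lintegral_mul_add (hg : IsStressRepr m ν Ω g) :
    ∫⁻ p, ENNReal.ofReal (g p.1) * ENNReal.ofReal (g p.2) ∂edgeMeasure hm ν hΩ
      + ∫⁻ x in Ω, ENNReal.ofReal (g x) ∂ν = ∫⁻ x in Ω, ENNReal.ofReal (g x) ^ 2 ∂ν := by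
  have hmeas := hg.measurable
  rw [lintegral_edgeMeasure hm hΩ (by fun_prop)]
  simp_rw [lintegral_const_mul' _ _ ENNReal.ofReal_ne_top]
  rw [setLIntegral_mClosure_eq fun x hx => by simp [hg.eq_zero_of_notMem x hx],
    ← lintegral_add_right _ hmeas.ennreal_ofReal]
  refine lintegral_congr_ae ?_
  filter_upwards [hg.lintegral_add_one] with x hx
  rw [← mul_add_one, hx, sq]

lemma lintegral_sub_sq_edgeMeasure (hg : IsStressRepr m ν Ω g) (hrev : Reversible m ν) :
    ∫⁻ p, ENNReal.ofReal ((g p.2 - g p.1) ^ 2) ∂edgeMeasure hm ν hΩ =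
      2 * ∫⁻ x in Ω, ENNReal.ofReal (g x) ∂ν := by
  have hmeas := hg.measurable
  have hsq : ∀ x ∉ Ω, ENNReal.ofReal (g x) ^ 2 = 0 := fun x hx => by
    simp [hg.eq_zero_of_notMem x hx]
  set I := ∫⁻ p, ENNReal.ofReal (g p.1) * ENNReal.ofReal (g p.2) ∂edgeMeasure hm ν hΩ
  have hIT := hg.lintegral_mul_add (hm := hm) (hΩ := hΩ)
  have hI : 2 * I ≠ ⊤ := ENNReal.mul_ne_top ENNReal.ofNat_ne_top <|
    ne_top_of_le_ne_top hg.lintegral_sq_ne_top (hIT ▸ le_self_add)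
  refine (ENNReal.add_left_inj hI).mp ?_
  calc ∫⁻ p, ENNReal.ofReal ((g p.2 - g p.1) ^ 2) ∂edgeMeasure hm ν hΩ + 2 * I
      = ∫⁻ p, (ENNReal.ofReal ((g p.2 - g p.1) ^ 2)
          + 2 * (ENNReal.ofReal (g p.1) * ENNReal.ofReal (g p.2))) ∂edgeMeasure hm ν hΩ := by
        rw [lintegral_add_left (by fun_prop), lintegral_const_mul' _ _ ENNReal.ofNat_ne_top]
    _ = ∫⁻ p, (ENNReal.ofReal (g p.1) ^ 2 + ENNReal.ofReal (g p.2) ^ 2)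
          ∂edgeMeasure hm ν hΩ :=
        lintegral_congr fun p => ofReal_sub_sq_add_two_mul (hg.nonneg _) (hg.nonneg _)
    _ = 2 * ∫⁻ x in Ω, ENNReal.ofReal (g x) ∂ν + 2 * I := by
        rw [lintegral_add_left (by fun_prop), hrev.lintegral_fst_edgeMeasure (by fun_prop) hsq,
          hrev.lintegral_snd_edgeMeasure (by fun_prop) hsq, ← hIT]
        ring

lemma setLIntegral_compl_prod_snd_eq_measure (hg : IsStressRepr m ν Ω g) (hrev : Reversible m ν) :
    ∫⁻ p in Ωᶜ ×ˢ Ω, ENNReal.ofReal (g p.2) ∂edgeMeasure hm ν hΩ = ν Ω := by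
  have hmeas := hg.measurable
  have hΩS : Ω ∩ mClosure m Ω = Ω := Set.inter_eq_left.mpr subset_mClosure
  have hzero : ∀ x ∉ Ω, ENNReal.ofReal (g x) = 0 := fun x hx => by
    simp [hg.eq_zero_of_notMem x hx]
  set H : X → ℝ≥0∞ := fun x => ∫⁻ y in mClosure m Ω, ENNReal.ofReal (g y) ∂m x
  have hmean : ∫⁻ x in Ω, H x ∂ν + ν Ω = ∫⁻ x in Ω, ENNReal.ofReal (g x) ∂ν := by
    rw [← setLIntegral_one, ← lintegral_add_right _ measurable_const]
    exact lintegral_congr_ae hg.lintegral_add_one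
  have hsplit : ∫⁻ x in Ω, H x ∂ν + ∫⁻ p in Ωᶜ ×ˢ Ω, ENNReal.ofReal (g p.2) ∂edgeMeasure hm ν hΩ
      = ∫⁻ x in Ω, ENNReal.ofReal (g x) ∂ν := by
    rw [setLIntegral_edgeMeasure_prod hm hΩ (by fun_prop) hΩ.compl hΩ, hΩS,
      ← hrev.lintegral_snd_edgeMeasure (hm := hm) (hΩ := hΩ) (by fun_prop) hzero,
      lintegral_edgeMeasure hm hΩ (by fun_prop),
      ← lintegral_add_compl (μ := ν.restrict (mClosure m Ω)) _ hΩ,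
      Measure.restrict_restrict hΩ, hΩS, Measure.restrict_restrict hΩ.compl]
    congr 1
    refine lintegral_congr fun x => ?_
    exact (setLIntegral_mClosure_eq hzero).symm
  have hH : ∫⁻ x in Ω, H x ∂ν ≠ ⊤ := ne_top_of_le_ne_top hg.lintegral_ne_top (hmean ▸ le_self_add)
  exact (ENNReal.add_right_inj hH).mp (hsplit.trans hmean.symm)

lemma setLIntegral_compl_prod_snd_sq_le (hg : IsStressRepr m ν Ω g) (hrev : Reversible m ν) :
    ∫⁻ p in Ωᶜ ×ˢ Ω, ENNReal.ofReal (g p.2) ^ 2 ∂edgeMeasure hm ν hΩ ≤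
      ∫⁻ x in Ω, ENNReal.ofReal (g x) ∂ν := by
  have hmeas := hg.measurable
  set e : X × X → ℝ≥0∞ := fun p => ENNReal.ofReal ((g p.2 - g p.1) ^ 2)
  have he : Set.EqOn (fun p => ENNReal.ofReal (g p.2) ^ 2) e (Ωᶜ ×ˢ Ω) := fun p hp => by
    simp [e, hg.eq_zero_of_notMem p.1 hp.1, ENNReal.ofReal_pow (hg.nonneg _)]
  have hswap : ∫⁻ p in Ω ×ˢ Ωᶜ, e p ∂edgeMeasure hm ν hΩ =
      ∫⁻ p in Ωᶜ ×ˢ Ω, e p ∂edgeMeasure hm ν hΩ := by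
    rw [← hrev.setLIntegral_swap_edgeMeasure, Set.preimage_swap_prod]
    simp only [e, Prod.fst_swap, Prod.snd_swap, sub_sq_comm]
  have hdisj : Disjoint (Ωᶜ ×ˢ Ω) (Ω ×ˢ Ωᶜ) :=
    Set.disjoint_prod.mpr (Or.inl disjoint_compl_left)
  refine (ENNReal.mul_le_mul_iff_right two_ne_zero ENNReal.ofNat_ne_top).mp ?_
  calc 2 * ∫⁻ p in Ωᶜ ×ˢ Ω, ENNReal.ofReal (g p.2) ^ 2 ∂edgeMeasure hm ν hΩ
      = ∫⁻ p in Ωᶜ ×ˢ Ω ∪ Ω ×ˢ Ωᶜ, e p ∂edgeMeasure hm ν hΩ := by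
        rw [lintegral_union (hΩ.prod hΩ.compl) hdisj, setLIntegral_congr_fun (hΩ.compl.prod hΩ) he,
          hswap, two_mul]
    _ ≤ ∫⁻ p, e p ∂edgeMeasure hm ν hΩ := setLIntegral_le_lintegral _ _
    _ = 2 * ∫⁻ x in Ω, ENNReal.ofReal (g x) ∂ν := hg.lintegral_sub_sq_edgeMeasure hrev

lemma sq_measure_le_mul_mPerimeter (hg : IsStressRepr m ν Ω g) (hm : IsRandomWalk m)
    (hrev : Reversible m ν) (hΩ : MeasurableSet Ω) :
    ν Ω ^ 2 ≤ (∫⁻ x in Ω, ENNReal.ofReal (g x) ∂ν) * mPerimeter m ν Ω := by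
  have hmeas := hg.measurable
  have hCS := sq_lintegral_le_lintegral_sq_mul_measure_univ
    ((edgeMeasure hm ν hΩ).restrict (Ωᶜ ×ˢ Ω)) (f := fun p => ENNReal.ofReal (g p.2))
    (by fun_prop)
  rw [hg.setLIntegral_compl_prod_snd_eq_measure hrev, Measure.restrict_apply_univ,
    hrev.edgeMeasure_prod_swap, hrev.edgeMeasure_prod_compl hΩ subset_rfl] at hCS
  exact hCS.trans (mul_le_mul_left (hg.setLIntegral_compl_prod_snd_sq_le hrev) _)

lemma two_mul_cheeger1_mul_le (hg : IsStressRepr m ν Ω g) (hrev : Reversible m ν) :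
    2 * cheeger1 m ν Ω * ∫⁻ x in Ω, ENNReal.ofReal (g x) ∂ν ≤
      ∫⁻ p, ENNReal.ofReal |g p.2 - g p.1| ∂edgeMeasure hm ν hΩ := by
  set E : ℝ → Set X := fun t => {x | t ≤ g x}
  have hE (t : ℝ) : MeasurableSet (E t) := measurableSet_le measurable_const hg.measurable
  have hEΩ (t : ℝ) (ht : 0 < t) : E t ⊆ Ω := fun x hx => by
    by_contra hxΩ
    exact (lt_of_lt_of_le ht hx).ne' (hg.eq_zero_of_notMem x hxΩ)
  have hlevel (t : ℝ) (ht : t ∈ Set.Ioi 0) : 2 * cheeger1 m ν Ω * ν.restrict Ω (E t) ≤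
      edgeMeasure hm ν hΩ (E t ×ˢ (E t)ᶜ ∪ (E t)ᶜ ×ˢ E t) := by
    rw [measure_union (Set.disjoint_prod.mpr (Or.inl disjoint_compl_right))
        ((hE t).compl.prod (hE t)), hrev.edgeMeasure_prod_swap (E t) (E t)ᶜ,
      hrev.edgeMeasure_prod_compl (hE t) (hEΩ t ht), ← two_mul, mul_assoc]
    gcongr
    exact (mul_le_mul_right (Measure.restrict_apply_le _ _) _).trans
      (cheeger1_mul_le_mPerimeter (hE t) (hEΩ t ht))
  calc 2 * cheeger1 m ν Ω * ∫⁻ x in Ω, ENNReal.ofReal (g x) ∂ν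
      = 2 * cheeger1 m ν Ω * ∫⁻ t in Set.Ioi 0, ν.restrict Ω (E t) := by
        rw [lintegral_eq_lintegral_meas_le _ (ae_of_all _ hg.nonneg)
          hg.measurable.aemeasurable]
    _ ≤ ∫⁻ t in Set.Ioi 0, 2 * cheeger1 m ν Ω * ν.restrict Ω (E t) :=
        lintegral_const_mul_le _ _
    _ ≤ ∫⁻ t in Set.Ioi 0, edgeMeasure hm ν hΩ (E t ×ˢ (E t)ᶜ ∪ (E t)ᶜ ×ˢ E t) :=
        setLIntegral_mono' measurableSet_Ioi hlevel
    _ ≤ ∫⁻ t, edgeMeasure hm ν hΩ (E t ×ˢ (E t)ᶜ ∪ (E t)ᶜ ×ˢ E t) :=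
        setLIntegral_le_lintegral _ _
    _ = ∫⁻ p, ENNReal.ofReal |g p.2 - g p.1| ∂edgeMeasure hm ν hΩ :=
        (lintegral_ofReal_abs_sub_eq _ hg.measurable).symm

lemma sq_lintegral_abs_sub_le (hg : IsStressRepr m ν Ω g) (hrev : Reversible m ν) :
    (∫⁻ p, ENNReal.ofReal |g p.2 - g p.1| ∂edgeMeasure hm ν hΩ) ^ 2 ≤
      2 * (∫⁻ x in Ω, ENNReal.ofReal (g x) ∂ν) * ν (mClosure m Ω) := by
  have hmeas := hg.measurable
  calc (∫⁻ p, ENNReal.ofReal |g p.2 - g p.1| ∂edgeMeasure hm ν hΩ) ^ 2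
      ≤ (∫⁻ p, ENNReal.ofReal |g p.2 - g p.1| ^ 2 ∂edgeMeasure hm ν hΩ) *
          edgeMeasure hm ν hΩ Set.univ :=
        sq_lintegral_le_lintegral_sq_mul_measure_univ _ (by fun_prop)
    _ = 2 * (∫⁻ x in Ω, ENNReal.ofReal (g x) ∂ν) * edgeMeasure hm ν hΩ Set.univ := by
        simp_rw [← ENNReal.ofReal_pow (abs_nonneg _), sq_abs]
        rw [hg.lintegral_sub_sq_edgeMeasure hrev]
    _ ≤ 2 * (∫⁻ x in Ω, ENNReal.ofReal (g x) ∂ν) * ν (mClosure m Ω) := by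
        gcongr
        exact edgeMeasure_univ_le hm hΩ

end IsStressRepr

namespace IsStressFunction

variable {f : X → ℝ}

lemma exists_ae_eq (hf : IsStressFunction m ν Ω f) (hm : IsRandomWalk m)
    (hΩ : MeasurableSet Ω) :
    ∃ g : X → ℝ, Measurable g ∧ (∀ x, 0 ≤ g x) ∧ (∀ x ∉ Ω, g x = 0) ∧
      f =ᵐ[ν.restrict (mClosure m Ω)] g := by
  have hS := measurableSet_mClosure hm hΩ
  have hfm := hf.1.1.aestronglyMeasurable
  refine ⟨Ω.indicator fun x => max (hfm.mk f x) 0,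
    (hfm.stronglyMeasurable_mk.measurable.max measurable_const).indicator hΩ,
    fun x => Set.indicator_nonneg (fun _ _ => le_max_right _ _) x,
    fun x hx => Set.indicator_of_notMem hx _, ?_⟩
  have hbdry := (ae_restrict_iff' (measurableSet_mBoundary hm hΩ)).mp hf.1.2
  have hmk := (ae_restrict_iff' hS).mp hfm.ae_eq_mk
  have hnn := (ae_restrict_iff' hS).mp hf.2.1
  rw [Filter.EventuallyEq, ae_restrict_iff' hS]
  filter_upwards [hbdry, hmk, hnn] with x hxb hxmk hxnn hxS
  by_cases hxΩ : x ∈ Ω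
  · rw [Set.indicator_of_mem hxΩ, ← hxmk hxS, max_eq_left (hxnn hxS)]
  · rw [Set.indicator_of_notMem hxΩ, hxb (hxS.resolve_left hxΩ)]

lemma isStressRepr_of_ae_eq (hf : IsStressFunction m ν Ω f) (hm : IsRandomWalk m)
    (hrev : Reversible m ν) (hΩ : MeasurableSet Ω)
    [IsFiniteMeasure (ν.restrict (mClosure m Ω))] {g : X → ℝ} (hg : Measurable g)
    (hg0 : ∀ x, 0 ≤ g x) (hgΩ : ∀ x ∉ Ω, g x = 0) (hfg : f =ᵐ[ν.restrict (mClosure m Ω)] g) :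
    IsStressRepr m ν Ω g := by
  have hS := measurableSet_mClosure hm hΩ
  have hL2 : MemLp g 2 (ν.restrict (mClosure m Ω)) := by
    simpa using hf.1.1.ae_eq hfg
  refine ⟨hg, hg0, hgΩ, ?_, ?_, ?_⟩
  · rw [← setLIntegral_mClosure_eq fun x hx => by simp [hgΩ x hx]]
    exact (hL2.integrable one_le_two).lintegral_lt_top.ne
  · rw [← setLIntegral_mClosure_eq fun x hx => by simp [hgΩ x hx]]
    simpa [ENNReal.ofReal_pow (hg0 _)] using hL2.integrable_sq.lintegral_lt_top.ne
  · have hae : ∀ᵐ x ∂ν.restrict Ω, f =ᵐ[(m x).restrict (mClosure m Ω)] g :=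
      ae_restrict_of_ae_restrict_of_subset subset_mClosure
        (((hrev.isReversible hm).restrict hS).ae_ae hfg)
    filter_upwards [hf.2.2, hae, ae_restrict_of_ae_restrict_of_subset subset_mClosure hfg,
      ae_restrict_mClosure_eq hm hrev hΩ] with x hx hfgx hfx hmx
    have := hm.1 x
    rw [hmx] at hx hfgx ⊢
    refine lintegral_ofReal_add_one_of_integral_sub hg0 ?_
    have hfg' : ∫ y, (f y - f x) ∂m x = ∫ y, (g y - g x) ∂m x :=
      integral_congr_ae (hfgx.mono fun y hy => by simp only [hy, hfx])
    linarith

lemma exists_isStressRepr (hf : IsStressFunction m ν Ω f) (hm : IsRandomWalk m)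
    (hrev : Reversible m ν) (hΩ : MeasurableSet Ω)
    [IsFiniteMeasure (ν.restrict (mClosure m Ω))] :
    ∃ g, IsStressRepr m ν Ω g ∧
      ENNReal.ofReal (∫ x in Ω, f x ∂ν) = ∫⁻ x in Ω, ENNReal.ofReal (g x) ∂ν := by
  obtain ⟨g, hg, hg0, hgΩ, hfg⟩ := hf.exists_ae_eq hm hΩ
  have hgrepr := hf.isStressRepr_of_ae_eq hm hrev hΩ hg hg0 hgΩ hfg
  refine ⟨g, hgrepr, ?_⟩
  rw [integral_congr_ae (ae_restrict_of_ae_restrict_of_subset subset_mClosure hfg),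
    integral_eq_lintegral_of_nonneg_ae (ae_of_all _ hg0) hg.aestronglyMeasurable,
    ENNReal.ofReal_toReal hgrepr.lintegral_ne_top]

end IsStressFunction

end RandomWalkSpace

theorem polya_makai_general {X : Type*} [MeasurableSpace X]
    (m : X → Measure X) (ν : Measure X)
    (hm : RandomWalkSpace.IsRandomWalk m) (hrev : RandomWalkSpace.Reversible m ν)
    (Ω : Set X) (hΩ : MeasurableSet Ω)
    (h0 : 0 < ν Ω)
    (h2 : ν (RandomWalkSpace.mClosure m Ω) < ⊤)
    (f : X → ℝ) (hf : RandomWalkSpace.IsStressFunction m ν Ω f) :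
    ν Ω ^ 2 / RandomWalkSpace.mPerimeter m ν Ω ≤ ENNReal.ofReal (∫ x in Ω, f x ∂ν) ∧
      (RandomWalkSpace.cheeger1 m ν Ω = RandomWalkSpace.mPerimeter m ν Ω / ν Ω →
        ENNReal.ofReal (∫ x in Ω, f x ∂ν) ≤
          ν Ω ^ 2 * ν (RandomWalkSpace.mClosure m Ω) /
            (2 * RandomWalkSpace.mPerimeter m ν Ω ^ 2)) := by
  have : IsFiniteMeasure (ν.restrict (RandomWalkSpace.mClosure m Ω)) := ⟨by simpa using h2⟩
  obtain ⟨g, hg, hT⟩ := hf.exists_isStressRepr hm hrev hΩ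
  rw [hT]
  have hlower := hg.sq_measure_le_mul_mPerimeter hm hrev hΩ
  refine ⟨ENNReal.div_le_of_le_mul hlower, fun hcal => ?_⟩
  have hP0 : RandomWalkSpace.mPerimeter m ν Ω ≠ 0 := fun hP => by
    rw [hP, mul_zero, nonpos_iff_eq_zero, pow_eq_zero_iff two_ne_zero] at hlower
    exact h0.ne' hlower
  have hΩtop : ν Ω ≠ ⊤ := ne_top_of_le_ne_top h2.ne (measure_mono RandomWalkSpace.subset_mClosure)
  refine ENNReal.le_sq_mul_div_of_sq_le h0.ne' hΩtop hP0
    (ne_top_of_le_ne_top hΩtop (RandomWalkSpace.mPerimeter_le_measure hm)) hg.lintegral_ne_top ?_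
  have hTV := hg.two_mul_cheeger1_mul_le (hm := hm) (hΩ := hΩ) hrev
  rw [hcal] at hTV
  exact (pow_le_pow_left₀ zero_le hTV 2).trans (hg.sq_lintegral_abs_sub_le hrev)

/-- `ν(Ω)²/P_m(Ω) ≤ T_m(Ω)`, and if `Ω` is `m`-calibrable
(`h_1^m(Ω) = P_m(Ω)/ν(Ω)`) then `T_m(Ω) ≤ (1/2) ν(Ω)² ν(Ω_m) / P_m(Ω)²`. -/
theorem polya_makai {X : Type*} [MeasurableSpace X]
    (m : X → Measure X) (ν : Measure X) [SigmaFinite ν]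
    (hm : RandomWalkSpace.IsRandomWalk m) (hrev : RandomWalkSpace.Reversible m ν)
    (Ω : Set X) (hΩ : MeasurableSet Ω)
    (hconn : RandomWalkSpace.mConnected m ν Ω)
    (hconnm : RandomWalkSpace.mConnected m ν (RandomWalkSpace.mClosure m Ω))
    (h0 : 0 < ν Ω) (h1 : ν Ω < ν (RandomWalkSpace.mClosure m Ω))
    (h2 : ν (RandomWalkSpace.mClosure m Ω) < ⊤)
    (hpoinc : RandomWalkSpace.PoincareInequality m ν Ω 2)
    (f : X → ℝ) (hf : RandomWalkSpace.IsStressFunction m ν Ω f) :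
    ν Ω ^ 2 / RandomWalkSpace.mPerimeter m ν Ω ≤ ENNReal.ofReal (∫ x in Ω, f x ∂ν) ∧
      (RandomWalkSpace.cheeger1 m ν Ω = RandomWalkSpace.mPerimeter m ν Ω / ν Ω →
        ENNReal.ofReal (∫ x in Ω, f x ∂ν) ≤
          ν Ω ^ 2 * ν (RandomWalkSpace.mClosure m Ω) /
            (2 * RandomWalkSpace.mPerimeter m ν Ω ^ 2)) :=
  polya_makai_general m ν hm hrev Ω hΩ h0 h2 f hf
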